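/- arXiv:0809.2258 — 2 statements merged into one kernel-verified Lean document; each statement's English description precedes it below -/
import Mathlib

section
/- For all 0<q<1 and all integers n≥1, the offset b_n(q) satisfies b_n(q) > 2q·κ(q)²·(1−q^n)/(1−q)². In particular b_n(q) > 0. -/
/-- Partial product of the Euler function: `λ_k(q) = ∏_{i=1}^k (1 - q^i)`, with `λ_0(q) = 1`. -/
noncomputable def eulerLam (q : ℝ) (k : ℕ) : ℝ := ∏ i ∈ Finset.range k, (1 - q ^ (i + 1))

/-- The Euler function `κ(q) = ∏_{i=1}^∞ (1 - q^i)`. -/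
noncomputable def eulerKappa (q : ℝ) : ℝ := ∏' i : ℕ, (1 - q ^ (i + 1))

/-- The tail product `μ_n(q) = ∏_{i=n}^∞ (1 - q^i)`. -/
noncomputable def eulerMu (q : ℝ) (n : ℕ) : ℝ := ∏' i : ℕ, (1 - q ^ (n + i))

/-- The offset `b_n(q) = Σ_{k=1}^n λ_{k-1}(q) λ_{n-k}(q) - n κ(q)²`, the expected number of
posts in a random graph order on `n` elements minus `n κ(q)²`. -/
noncomputable def postOffset (q : ℝ) (n : ℕ) : ℝ :=
  (∑ k ∈ Finset.Icc 1 n, eulerLam q (k - 1) * eulerLam q (n - k)) - n * eulerKappa q ^ 2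


/-!
Writing `κ = λ_k · ∏_{i>k} (1 - q^i)` and bounding the tail with `1 - x ≤ e^{-x}` gives
`κ · exp (q^{k+1}/(1-q)) ≤ λ_k`. Hence each summand of `b_n` satisfies
`λ_{k-1} λ_{n-k} - κ² ≥ κ² (e^{s+t} - 1) > κ² (s + t)` with `s = q^k/(1-q)`, `t = q^{n-k+1}/(1-q)`,
and summing these two geometric series over `k` gives the bound.
-/

open Finset Real

namespace Real

variable {ι : Type*} {f : ι → ℝ}

theorem summable_log_one_sub_of_summable (hf : Summable f) :
    Summable fun i ↦ log (1 - f i) := by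
  simpa only [sub_eq_add_neg] using summable_log_one_add_of_summable hf.neg

theorem hasProd_one_sub_of_summable (hf : Summable f) (hf1 : ∀ i, f i < 1) :
    HasProd (fun i ↦ 1 - f i) (exp (∑' i, log (1 - f i))) :=
  hasProd_of_hasSum_log (fun i ↦ sub_pos.2 (hf1 i)) (summable_log_one_sub_of_summable hf).hasSum

theorem tprod_one_sub_pos (hf : Summable f) (hf1 : ∀ i, f i < 1) :
    0 < ∏' i, (1 - f i) := by
  rw [(hasProd_one_sub_of_summable hf hf1).tprod_eq]
  exact exp_pos _

theorem tprod_one_sub_le_exp_neg_tsum (hf : Summable f) (hf1 : ∀ i, f i < 1) :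
    ∏' i, (1 - f i) ≤ exp (-∑' i, f i) := by
  rw [(hasProd_one_sub_of_summable hf hf1).tprod_eq, exp_le_exp, ← tsum_neg]
  refine (summable_log_one_sub_of_summable hf).tsum_le_tsum (fun i ↦ ?_) hf.neg
  linarith [log_le_sub_one_of_pos (sub_pos.2 (hf1 i))]

end Real

theorem sum_range_pow_succ {K : Type*} [Field K] {x : K} (hx : x ≠ 1) (n : ℕ) :
    ∑ k ∈ range n, x ^ (k + 1) = x * (1 - x ^ n) / (1 - x) := by
  simp_rw [pow_succ', ← mul_sum, geom_sum_eq hx]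
  field_simp
  ring

section Euler

variable {q : ℝ}

theorem hasSum_pow_add (hq0 : 0 ≤ q) (hq1 : q < 1) (n : ℕ) :
    HasSum (fun i ↦ q ^ (n + i)) (q ^ n / (1 - q)) := by
  simpa [pow_add, div_eq_mul_inv] using (hasSum_geometric_of_lt_one hq0 hq1).mul_left (q ^ n)

theorem pow_add_lt_one (hq0 : 0 ≤ q) (hq1 : q < 1) {n : ℕ} (hn : 1 ≤ n) (i : ℕ) :
    q ^ (n + i) < 1 :=
  pow_lt_one₀ hq0 hq1 (by omega)

theorem multipliable_one_sub_pow_add (hq0 : 0 ≤ q) (hq1 : q < 1) {n : ℕ} (hn : 1 ≤ n) :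
    Multipliable fun i ↦ 1 - q ^ (n + i) :=
  (hasProd_one_sub_of_summable (hasSum_pow_add hq0 hq1 n).summable
    (pow_add_lt_one hq0 hq1 hn)).multipliable

theorem eulerMu_pos (hq0 : 0 ≤ q) (hq1 : q < 1) {n : ℕ} (hn : 1 ≤ n) : 0 < eulerMu q n :=
  tprod_one_sub_pos (hasSum_pow_add hq0 hq1 n).summable (pow_add_lt_one hq0 hq1 hn)

theorem eulerMu_le_exp (hq0 : 0 ≤ q) (hq1 : q < 1) {n : ℕ} (hn : 1 ≤ n) :
    eulerMu q n ≤ exp (-(q ^ n / (1 - q))) := by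
  rw [← (hasSum_pow_add hq0 hq1 n).tsum_eq]
  exact tprod_one_sub_le_exp_neg_tsum (hasSum_pow_add hq0 hq1 n).summable
    (pow_add_lt_one hq0 hq1 hn)

theorem eulerKappa_eq_eulerLam_mul_eulerMu (hq0 : 0 ≤ q) (hq1 : q < 1) (k : ℕ) :
    eulerKappa q = eulerLam q k * eulerMu q (k + 1) := by
  have hshift : (fun i ↦ 1 - q ^ (i + k + 1)) = fun i ↦ 1 - q ^ (k + 1 + i) := by
    funext i; ring_nf
  have hm : Multipliable fun i ↦ 1 - q ^ (i + k + 1) := by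
    rw [hshift]; exact multipliable_one_sub_pow_add hq0 hq1 (by omega)
  rw [eulerKappa, ← hm.prod_mul_tprod_nat_mul' (f := fun i ↦ 1 - q ^ (i + 1)), hshift, eulerLam,
    eulerMu]

theorem eulerLam_pos (hq0 : 0 ≤ q) (hq1 : q < 1) (k : ℕ) : 0 < eulerLam q k :=
  prod_pos fun i _ ↦ sub_pos.2 (pow_lt_one₀ hq0 hq1 (by omega))

theorem eulerKappa_pos (hq0 : 0 ≤ q) (hq1 : q < 1) : 0 < eulerKappa q := by
  rw [eulerKappa_eq_eulerLam_mul_eulerMu hq0 hq1 0]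
  exact mul_pos (eulerLam_pos hq0 hq1 0) (eulerMu_pos hq0 hq1 le_rfl)

theorem eulerKappa_mul_exp_le_eulerLam (hq0 : 0 ≤ q) (hq1 : q < 1) (k : ℕ) :
    eulerKappa q * exp (q ^ (k + 1) / (1 - q)) ≤ eulerLam q k := by
  rw [eulerKappa_eq_eulerLam_mul_eulerMu hq0 hq1 k]
  calc eulerLam q k * eulerMu q (k + 1) * exp (q ^ (k + 1) / (1 - q))
      ≤ eulerLam q k * exp (-(q ^ (k + 1) / (1 - q))) * exp (q ^ (k + 1) / (1 - q)) := by
        gcongr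
        · exact (eulerLam_pos hq0 hq1 k).le
        · exact eulerMu_le_exp hq0 hq1 (by omega)
    _ = eulerLam q k := by rw [mul_assoc, ← exp_add, neg_add_cancel, exp_zero, mul_one]

theorem eulerKappa_sq_mul_lt_eulerLam_mul_eulerLam (hq0 : 0 < q) (hq1 : q < 1) (a b : ℕ) :
    eulerKappa q ^ 2 * (1 + (q ^ (a + 1) + q ^ (b + 1)) / (1 - q)) <
      eulerLam q a * eulerLam q b := by
  set s := q ^ (a + 1) / (1 - q)
  set t := q ^ (b + 1) / (1 - q)
  have hst : 0 < s + t := by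
    have : 0 < 1 - q := by linarith
    positivity
  have hκ := eulerKappa_pos hq0.le hq1
  calc eulerKappa q ^ 2 * (1 + (q ^ (a + 1) + q ^ (b + 1)) / (1 - q))
      = eulerKappa q ^ 2 * (s + t + 1) := by rw [add_div]; ring
    _ < eulerKappa q ^ 2 * exp (s + t) := by gcongr; exact add_one_lt_exp hst.ne'
    _ = (eulerKappa q * exp s) * (eulerKappa q * exp t) := by rw [exp_add]; ring
    _ ≤ eulerLam q a * eulerLam q b := by
        gcongr
        · exact (eulerLam_pos hq0.le hq1 a).le
        · exact eulerKappa_mul_exp_le_eulerLam hq0.le hq1 a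
        · exact eulerKappa_mul_exp_le_eulerLam hq0.le hq1 b

end Euler

theorem postOffset_eq_sum_range (q : ℝ) (n : ℕ) :
    postOffset q n = ∑ k ∈ range n, (eulerLam q k * eulerLam q (n - 1 - k) - eulerKappa q ^ 2) := by
  rw [postOffset, sum_sub_distrib, sum_const, card_range, nsmul_eq_mul, ← Ico_add_one_right_eq_Icc,
    sum_Ico_eq_sum_range]
  congr 2 with k
  congr 2 <;> omega

/-- For all `0 < q < 1` and all integers `n ≥ 1`,
`b_n(q) > 2q·κ(q)²·(1-q^n)/(1-q)²`; in particular `b_n(q) > 0`. -/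
theorem postOffset_gt (q : ℝ) (hq0 : 0 < q) (hq1 : q < 1) (n : ℕ) (hn : 1 ≤ n) :
    2 * q * eulerKappa q ^ 2 * (1 - q ^ n) / (1 - q) ^ 2 < postOffset q n ∧
    0 < postOffset q n := by
  have hreflect : ∑ k ∈ range n, q ^ (n - 1 - k + 1) = ∑ k ∈ range n, q ^ (k + 1) :=
    sum_range_reflect (fun k ↦ q ^ (k + 1)) n
  have hbound : 2 * q * eulerKappa q ^ 2 * (1 - q ^ n) / (1 - q) ^ 2 < postOffset q n :=
    calc 2 * q * eulerKappa q ^ 2 * (1 - q ^ n) / (1 - q) ^ 2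
        = ∑ k ∈ range n, eulerKappa q ^ 2 * ((q ^ (k + 1) + q ^ (n - 1 - k + 1)) / (1 - q)) := by
          rw [← mul_sum, ← sum_div, sum_add_distrib, hreflect, sum_range_pow_succ hq1.ne]
          field_simp
          ring
      _ < ∑ k ∈ range n, (eulerLam q k * eulerLam q (n - 1 - k) - eulerKappa q ^ 2) := by
          refine sum_lt_sum_of_nonempty (nonempty_range_iff.2 (by omega)) fun k _ ↦ ?_
          linarith [eulerKappa_sq_mul_lt_eulerLam_mul_eulerLam hq0 hq1 k (n - 1 - k)]
      _ = postOffset q n := (postOffset_eq_sum_range q n).symm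
  refine ⟨hbound, lt_trans ?_ hbound⟩
  have hκ := eulerKappa_pos hq0.le hq1
  have hqn : 0 < 1 - q ^ n := sub_pos.2 (pow_lt_one₀ hq0.le hq1 (by omega))
  positivity
end

section
/- Let 0<p<1 and q=1−p. In a random graph order on the positive integers ℕ with parameter p, for every k≥2 and every 1≤i<k, the conditional probability that k−i ≺_ω k, given that k−j ≺_ω k for all 1≤j<i, equals 1−q^i. -/
open MeasureTheory ProbabilityTheory

/-- The index set of potential edges of a random graph order on `ℕ = {1, 2, 3, …}`:
pairs `(i, j)` with `1 ≤ i < j`. -/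
abbrev GraphOrderEdge : Type := {ij : ℕ × ℕ // 1 ≤ ij.1 ∧ ij.1 < ij.2}

/-- The random graph order relation `≺_ω`: the transitive closure of the relation
`{(i, j) : 1 ≤ i < j and ω(i, j) = 1}`. -/
def GraphOrderRel (ω : GraphOrderEdge → Bool) (a b : ℕ) : Prop :=
  Relation.TransGen (fun x y => ∃ h : 1 ≤ x ∧ x < y, ω ⟨(x, y), h⟩ = true) a b

/-- `μ` is the law of a random graph order on `ℕ = {1, 2, 3, …}` with parameter `p`:
a probability measure on edge configurations whose coordinates are independent
Bernoulli(`p`) random variables. -/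
structure IsRandomGraphOrderMeasure (μ : Measure (GraphOrderEdge → Bool)) (p : ℝ)
    (hp : 0 < p ∧ p < 1) : Prop where
  isProb : IsProbabilityMeasure μ
  indep : iIndepFun (fun e ω => ω e) μ
  bernoulli : ∀ e : GraphOrderEdge, μ.map (fun ω => ω e) =
    (PMF.bernoulli (Real.toNNReal p) (Real.toNNReal_le_one.mpr hp.2.le)).toMeasure

/-! Put `n = k - i`. On the conditioning event every `m` with `n < m < k` precedes `k`, so there
`n ≺ k` holds iff one of the `i` edges `(n, m)` with `n < m ≤ k` is present, an event of
probability `1 - q^i`. That event depends only on these edges, while the conditioning event depends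
only on edges with both ends in `(n, k]`, because a chain from `m > n` up to `k` stays in that
interval. Independence of disjoint sets of edges makes the conditioning irrelevant. -/

section IndependentCoordinates

variable {ι β : Type*}

lemma eq_preimage_restrict_image_of_dependsOn {U : Finset ι} {C : Set (ι → β)}
    (hC : DependsOn (· ∈ C) (U : Set ι)) : C = U.restrict ⁻¹' (U.restrict '' C) := by
  refine (Set.subset_preimage_image _ _).antisymm ?_
  rintro ω ⟨ω', hω', heq⟩
  have := hC (x := ω') (y := ω) fun i hi => congrFun heq ⟨i, hi⟩
  simpa [this] using hω'

lemma dependsOn_exists_eq (S : Finset ι) (b : β) :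
    DependsOn (· ∈ {ω : ι → β | ∃ i ∈ S, ω i = b}) (S : Set ι) :=
  fun x y h => propext <| exists_congr fun i => and_congr_right fun hi => by rw [h i hi]

variable [MeasurableSpace β] {μ : Measure (ι → β)}

lemma measure_inter_eq_mul_of_dependsOn [Countable β] [MeasurableSingletonClass β]
    (hindep : iIndepFun (fun i (ω : ι → β) => ω i) μ) {S T : Finset ι} (hST : Disjoint S T)
    {A B : Set (ι → β)} (hA : DependsOn (· ∈ A) (S : Set ι))
    (hB : DependsOn (· ∈ B) (T : Set ι)) :
    μ (A ∩ B) = μ A * μ B := by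
  rw [eq_preimage_restrict_image_of_dependsOn hA, eq_preimage_restrict_image_of_dependsOn hB]
  exact (hindep.indepFun_finset S T hST measurable_pi_apply).measure_inter_preimage_eq_mul _ _
    (Set.to_countable _).measurableSet (Set.to_countable _).measurableSet

lemma measure_forall_eq_prod (hindep : iIndepFun (fun i (ω : ι → β) => ω i) μ)
    [MeasurableSingletonClass β] (S : Finset ι) (b : β) :
    μ {ω | ∀ i ∈ S, ω i = b} = ∏ i ∈ S, μ {ω | ω i = b} := by
  have hinter :
      {ω | ∀ i ∈ S, ω i = b} = ⋂ i ∈ S, (fun ω : ι → β => ω i) ⁻¹' {b} := by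
    ext; simp
  rw [hinter]
  exact hindep.measure_inter_preimage_eq_mul S fun _ _ => measurableSet_singleton b

end IndependentCoordinates

namespace IsRandomGraphOrderMeasure

variable {μ : Measure (GraphOrderEdge → Bool)} {p : ℝ} {hp : 0 < p ∧ p < 1}

lemma measure_edge_eq (hμ : IsRandomGraphOrderMeasure μ p hp) (e : GraphOrderEdge) (b : Bool) :
    μ {ω | ω e = b} = PMF.bernoulli p.toNNReal (Real.toNNReal_le_one.mpr hp.2.le) b := by
  rw [← PMF.toMeasure_apply_singleton _ _ (measurableSet_singleton b), ← hμ.bernoulli e,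
    Measure.map_apply (measurable_pi_apply e) (measurableSet_singleton b)]
  rfl

lemma measure_edge_eq_true (hμ : IsRandomGraphOrderMeasure μ p hp) (e : GraphOrderEdge) :
    μ {ω | ω e = true} = ENNReal.ofReal p := by
  rw [hμ.measure_edge_eq, PMF.bernoulli_apply]
  rfl

lemma measure_edge_eq_false (hμ : IsRandomGraphOrderMeasure μ p hp) (e : GraphOrderEdge) :
    μ {ω | ω e = false} = ENNReal.ofReal (1 - p) := by
  rw [hμ.measure_edge_eq, PMF.bernoulli_apply, ENNReal.ofReal_sub _ hp.1.le, ENNReal.ofReal_one]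
  rfl

lemma measure_forall_edge_eq_true_ne_zero (hμ : IsRandomGraphOrderMeasure μ p hp)
    (S : Finset GraphOrderEdge) : μ {ω | ∀ e ∈ S, ω e = true} ≠ 0 := by
  rw [measure_forall_eq_prod hμ.indep, Finset.prod_ne_zero_iff]
  intro e _
  simpa [hμ.measure_edge_eq_true] using hp.1

lemma measure_exists_edge_eq_true (hμ : IsRandomGraphOrderMeasure μ p hp)
    (S : Finset GraphOrderEdge) :
    μ {ω | ∃ e ∈ S, ω e = true} = ENNReal.ofReal (1 - (1 - p) ^ S.card) := by
  have := hμ.isProb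
  have hcompl : {ω | ∃ e ∈ S, ω e = true} =
      {ω : GraphOrderEdge → Bool | ∀ e ∈ S, ω e = false}ᶜ := by
    ext
    simp only [Set.mem_ofPred_eq, Set.mem_compl_iff, not_forall, Bool.not_eq_false, exists_prop]
  have hmeas : MeasurableSet {ω : GraphOrderEdge → Bool | ∀ e ∈ S, ω e = false} := by
    simp only [Set.ofPred_forall]
    exact .iInter fun e => .iInter fun _ =>
      measurableSet_eq_fun (measurable_pi_apply e) measurable_const
  have hq : 0 ≤ 1 - p := by linarith [hp.2]
  rw [hcompl, prob_compl_eq_one_sub hmeas,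
    measure_forall_eq_prod hμ.indep, Finset.prod_congr rfl fun e _ => hμ.measure_edge_eq_false e,
    Finset.prod_const, ← ENNReal.ofReal_pow hq, ← ENNReal.ofReal_one,
    ← ENNReal.ofReal_sub _ (pow_nonneg hq _)]

end IsRandomGraphOrderMeasure

def edgesFrom (n k : ℕ) : Finset GraphOrderEdge := ({n} ×ˢ Finset.Ioc n k).subtype _

def edgesWithin (n k : ℕ) : Finset GraphOrderEdge :=
  (Finset.Ioc n k ×ˢ Finset.Ioc n k).subtype _

lemma mem_edgesFrom {n k : ℕ} {e : GraphOrderEdge} :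
    e ∈ edgesFrom n k ↔ e.1.1 = n ∧ n < e.1.2 ∧ e.1.2 ≤ k := by
  simp only [edgesFrom, Finset.mem_subtype, Finset.mem_product, Finset.mem_singleton,
    Finset.mem_Ioc]

lemma mem_edgesWithin {n k : ℕ} {e : GraphOrderEdge} :
    e ∈ edgesWithin n k ↔ (n < e.1.1 ∧ e.1.1 ≤ k) ∧ n < e.1.2 ∧ e.1.2 ≤ k := by
  simp [edgesWithin]

lemma card_edgesFrom {n : ℕ} (hn : 1 ≤ n) (k : ℕ) : (edgesFrom n k).card = k - n := by
  rw [edgesFrom, Finset.card_subtype, Finset.filter_true_of_mem, Finset.card_product,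
    Finset.card_singleton, Nat.card_Ioc, one_mul]
  simp only [Finset.mem_product, Finset.mem_singleton, Finset.mem_Ioc]
  rintro ⟨a, b⟩ ⟨rfl, hab, -⟩
  exact ⟨hn, hab⟩

lemma disjoint_edgesFrom_edgesWithin (n k : ℕ) : Disjoint (edgesFrom n k) (edgesWithin n k) := by
  rw [Finset.disjoint_left]
  intro e he he'
  rw [mem_edgesFrom] at he
  rw [mem_edgesWithin] at he'
  omega

lemma graphOrderRel_lt {ω : GraphOrderEdge → Bool} {a b : ℕ} (h : GraphOrderRel ω a b) :
    a < b := by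
  induction h with
  | single h => exact h.1.2
  | tail _ h ih => exact ih.trans h.choose.2

lemma graphOrderRel_of_agree {ω ω' : GraphOrderEdge → Bool} {lo b : ℕ}
    (hagree : ∀ e : GraphOrderEdge, lo ≤ e.1.1 → e.1.2 ≤ b → ω e = ω' e)
    {a : ℕ} (ha : lo ≤ a) (h : GraphOrderRel ω a b) : GraphOrderRel ω' a b := by
  induction h using Relation.TransGen.head_induction_on with
  | single hab =>
    obtain ⟨hab, he⟩ := hab
    exact .single ⟨hab, (hagree ⟨_, hab⟩ ha le_rfl).symm.trans he⟩
  | head hac hcb ih =>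
    obtain ⟨hac, he⟩ := hac
    exact .head ⟨hac, (hagree ⟨_, hac⟩ ha (graphOrderRel_lt hcb).le).symm.trans he⟩
      (ih (ha.trans hac.2.le))

lemma dependsOn_forall_graphOrderRel (n k : ℕ) :
    DependsOn (· ∈ {ω | ∀ m, n < m → m < k → GraphOrderRel ω m k})
      (edgesWithin n k : Set GraphOrderEdge) := by
  have key : ∀ ω ω' : GraphOrderEdge → Bool, (∀ e ∈ edgesWithin n k, ω e = ω' e) →
      ∀ m, n < m → GraphOrderRel ω m k → GraphOrderRel ω' m k := fun ω ω' h m hm =>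
    graphOrderRel_of_agree (lo := m) (fun e h1 h2 =>
      h e (mem_edgesWithin.2 ⟨⟨by omega, by omega⟩, by omega, h2⟩)) le_rfl
  intro ω ω' h
  exact propext ⟨fun hω m hnm hmk => key ω ω' h m hnm (hω m hnm hmk),
    fun hω m hnm hmk => key ω' ω (fun e he => (h e he).symm) m hnm (hω m hnm hmk)⟩

lemma graphOrderRel_iff_exists_edge {ω : GraphOrderEdge → Bool} {n k : ℕ}
    (h : ∀ m, n < m → m < k → GraphOrderRel ω m k) :
    GraphOrderRel ω n k ↔ ∃ e ∈ edgesFrom n k, ω e = true := by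
  constructor
  · intro hnk
    obtain ⟨m, ⟨hnm, he⟩, hmk⟩ := Relation.TransGen.head'_iff.1 hnk
    have hmk : m ≤ k := by
      rcases Relation.reflTransGen_iff_eq_or_transGen.1 hmk with rfl | hmk
      exacts [le_rfl, (graphOrderRel_lt hmk).le]
    exact ⟨_, mem_edgesFrom.2 ⟨rfl, hnm.2, hmk⟩, he⟩
  · rintro ⟨⟨⟨n', m⟩, hnm⟩, he, hω⟩
    obtain ⟨rfl, -, hmk⟩ := mem_edgesFrom.1 he
    rcases hmk.eq_or_lt with rfl | hmk
    · exact .single ⟨hnm, hω⟩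
    · exact .head ⟨hnm, hω⟩ (h m hnm.2 hmk)

lemma graphOrderRel_of_forall_edgesWithin {ω : GraphOrderEdge → Bool} {n k : ℕ}
    (h : ∀ e ∈ edgesWithin n k, ω e = true) :
    ∀ m, n < m → m < k → GraphOrderRel ω m k := fun m hnm hmk =>
  .single ⟨⟨by omega, hmk⟩,
    h _ (mem_edgesWithin.2 ⟨⟨hnm, hmk.le⟩, hnm.trans hmk, le_rfl⟩)⟩

theorem cond_prob_rel_eq_general (p q : ℝ) (hp : 0 < p ∧ p < 1) (hq : q = 1 - p)
    (μ : Measure (GraphOrderEdge → Bool)) (hμ : IsRandomGraphOrderMeasure μ p hp)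
    (k i : ℕ) (hik : i < k) :
    μ ({ω | GraphOrderRel ω (k - i) k} ∩
        {ω | ∀ j : ℕ, 1 ≤ j → j < i → GraphOrderRel ω (k - j) k}) /
      μ {ω | ∀ j : ℕ, 1 ≤ j → j < i → GraphOrderRel ω (k - j) k} =
      ENNReal.ofReal (1 - q ^ i) := by
  have := hμ.isProb
  set n := k - i
  set P := {ω | ∀ m, n < m → m < k → GraphOrderRel ω m k}
  have hP : {ω | ∀ j, 1 ≤ j → j < i → GraphOrderRel ω (k - j) k} = P := by
    ext ω
    refine ⟨fun h m hnm hmk => ?_, fun h j hj hji => h _ (by omega) (by omega)⟩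
    simpa [show k - (k - m) = m by omega] using h (k - m) (by omega) (by omega)
  have hA : {ω | GraphOrderRel ω n k} ∩ P =
      {ω | ∃ e ∈ edgesFrom n k, ω e = true} ∩ P := by
    ext ω
    exact and_congr_left graphOrderRel_iff_exists_edge
  have hP0 : μ P ≠ 0 := fun h0 => hμ.measure_forall_edge_eq_true_ne_zero (edgesWithin n k) <|
    measure_mono_null (fun _ => graphOrderRel_of_forall_edgesWithin) h0
  rw [hP, hA, measure_inter_eq_mul_of_dependsOn hμ.indep (disjoint_edgesFrom_edgesWithin n k)
    (dependsOn_exists_eq _ _) (dependsOn_forall_graphOrderRel n k),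
    ENNReal.mul_div_cancel_right hP0 (measure_ne_top _ _), hμ.measure_exists_edge_eq_true,
    card_edgesFrom (by omega), hq, show k - n = i by omega]

/-- In a random graph order on `ℕ = {1, 2, …}` with parameter `0 < p < 1` and `q = 1 - p`,
for every `k ≥ 2` and `1 ≤ i < k`, the conditional probability that `k - i ≺_ω k`,
given that `k - j ≺_ω k` for all `1 ≤ j < i`, equals `1 - q^i`. -/
theorem cond_prob_rel_eq (p q : ℝ) (hp : 0 < p ∧ p < 1) (hq : q = 1 - p)
    (μ : Measure (GraphOrderEdge → Bool)) (hμ : IsRandomGraphOrderMeasure μ p hp)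
    (k i : ℕ) (hk : 2 ≤ k) (hi1 : 1 ≤ i) (hik : i < k) :
    μ ({ω | GraphOrderRel ω (k - i) k} ∩
        {ω | ∀ j : ℕ, 1 ≤ j → j < i → GraphOrderRel ω (k - j) k}) /
      μ {ω | ∀ j : ℕ, 1 ≤ j → j < i → GraphOrderRel ω (k - j) k} =
      ENNReal.ofReal (1 - q ^ i) :=
  cond_prob_rel_eq_general p q hp hq μ hμ k i hik
end
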